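/- If C is an s-minimal [n,k,d]_q linear code with 1 ≤ s ≤ k-1, then d ≥ (q-1)(k-1) + 1. -/

import Mathlib

open Module

variable {F : Type*} [Field F] [Fintype F]

/-- The support of a subspace `U ⊆ F^ι`: coordinates where some vector of `U` is nonzero. -/
def csupp {ι : Type*} (U : Submodule F (ι → F)) : Set ι :=
  {j | ∃ x ∈ U, x j ≠ 0}

/-- The support weight of a subspace of `F^ι`. -/
noncomputable def wt {ι : Type*} (U : Submodule F (ι → F)) : ℕ := (csupp U).ncard

/-- `U` is an `s`-minimal subcode of `C`. -/
def IsMinimalSubcode {ι : Type*} (C U : Submodule F (ι → F)) (s : ℕ) : Prop :=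
  U ≤ C ∧ Module.finrank F U = s ∧
    ∀ V : Submodule F (ι → F), V ≤ C → Module.finrank F V = s →
      csupp V ⊆ csupp U → V = U

/-- `C` is an `s`-minimal code. -/
def SMinimal {ι : Type*} (C : Submodule F (ι → F)) (s : ℕ) : Prop :=
  ∀ U : Submodule F (ι → F), U ≤ C → Module.finrank F U = s → IsMinimalSubcode C U s

/-- The `s`-th generalized Hamming weight of `C`. -/
noncomputable def dGHW {ι : Type*} (C : Submodule F (ι → F)) (s : ℕ) : ℕ :=
  sInf {w | ∃ U : Submodule F (ι → F), U ≤ C ∧ Module.finrank F U = s ∧ wt U = w}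

/-- The `s`-th maximum support weight of `C`. -/
noncomputable def DGHW {ι : Type*} (C : Submodule F (ι → F)) (s : ℕ) : ℕ :=
  sSup {w | ∃ U : Submodule F (ι → F), U ≤ C ∧ Module.finrank F U = s ∧ wt U = w}


set_option synthInstance.maxHeartbeats 2000000
set_option maxHeartbeats 2000000
set_option linter.unusedSectionVars false

open MvPolynomial in
lemma jamison {m : ℕ} (hm : 0 < m) (B : Finset (Fin m → F))
    (hB : ∀ a : Fin m → F, a ≠ 0 → ∀ β : F, ∃ z ∈ B, ∑ i, a i * z i = β) :
    m * (Fintype.card F - 1) + 1 ≤ B.card := by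
  classical
  have hq2 : 2 ≤ Fintype.card F := Fintype.one_lt_card
  -- B is nonempty
  obtain ⟨b₀, hb₀, -⟩ := hB (Pi.single ⟨0, hm⟩ 1) (by
    intro h
    have := congrFun h ⟨0, hm⟩
    simp at this) 0
  set E : Finset (Fin m → F) := (B.erase b₀).image (fun b => b - b₀) with hEdef
  have hEcard : E.card = B.card - 1 := by
    rw [hEdef, Finset.card_image_of_injective _ (sub_left_injective), Finset.card_erase_of_mem hb₀]
  have hE : ∀ a : Fin m → F, a ≠ 0 → ∃ e ∈ E, ∑ i, a i * e i = 1 := by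
    intro a ha
    obtain ⟨z, hz, hzs⟩ := hB a ha (1 + ∑ i, a i * b₀ i)
    have hzne : z ≠ b₀ := by
      intro h; rw [h] at hzs
      exact one_ne_zero (right_eq_add.mp hzs)
    refine ⟨z - b₀, Finset.mem_image_of_mem _ (Finset.mem_erase.mpr ⟨hzne, hz⟩), ?_⟩
    simp only [Pi.sub_apply, mul_sub]
    rw [Finset.sum_sub_distrib, hzs]
    ring
  -- the polynomial
  set f : MvPolynomial (Fin m) F := ∏ e ∈ E, ((∑ i, C (e i) * X i) - 1) with hfdef
  have heval : ∀ x : Fin m → F, eval x f = ∏ e ∈ E, ((∑ i, e i * x i) - 1) := by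
    intro x
    rw [hfdef]
    simp [eval_prod]
  have h0 : eval (0 : Fin m → F) f ≠ 0 := by
    rw [heval]
    simp only [Pi.zero_apply, mul_zero, Finset.sum_const_zero, zero_sub]
    rw [Finset.prod_const]
    exact pow_ne_zero _ (by norm_num)
  have hx0 : ∀ x : Fin m → F, x ≠ 0 → eval x f = 0 := by
    intro x hx
    obtain ⟨e, heE, he⟩ := hE x hx
    rw [heval]
    apply Finset.prod_eq_zero heE
    rw [sub_eq_zero, ← he]
    exact Finset.sum_congr rfl fun i _ => mul_comm _ _
  have hsum : ∑ x : Fin m → F, eval x f ≠ 0 := by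
    rwa [Finset.sum_eq_single (0 : Fin m → F)
      (fun x _ hx => hx0 x hx) (fun h => absurd (Finset.mem_univ _) h)]
  -- degree bound
  have hdeg : f.totalDegree ≤ E.card := by
    rw [hfdef]
    refine le_trans (totalDegree_finset_prod _ _) ?_
    calc ∑ e ∈ E, ((∑ i, C (e i) * X i : MvPolynomial (Fin m) F) - 1).totalDegree
        ≤ ∑ _e ∈ E, 1 := by
          refine Finset.sum_le_sum fun e _ => ?_
          refine le_trans (totalDegree_sub _ _) (max_le ?_ (by simp [totalDegree_one]))
          refine le_trans (totalDegree_finset_sum _ _) (Finset.sup_le fun i _ => ?_)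
          refine le_trans (totalDegree_mul _ _) ?_
          simp [totalDegree_C, totalDegree_X]
      _ = E.card := by simp
  by_contra hlt
  push_neg at hlt
  have hBpos : 1 ≤ B.card := Finset.card_pos.mpr ⟨b₀, hb₀⟩
  have : f.totalDegree < (Fintype.card F - 1) * Fintype.card (Fin m) := by
    have : E.card < m * (Fintype.card F - 1) := by omega
    calc f.totalDegree ≤ E.card := hdeg
      _ < m * (Fintype.card F - 1) := this
      _ = (Fintype.card F - 1) * Fintype.card (Fin m) := by rw [Fintype.card_fin, mul_comm]
  exact hsum (MvPolynomial.sum_eval_eq_zero f this)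

lemma csupp_mono {ι : Type*} {U V : Submodule F (ι → F)} (h : U ≤ V) : csupp U ⊆ csupp V := by
  rintro j ⟨x, hx, hj⟩; exact ⟨x, h hx, hj⟩

lemma csupp_span_singleton {ι : Type*} (c : ι → F) :
    csupp (Submodule.span F {c}) = Function.support c := by
  ext j
  constructor
  · rintro ⟨x, hx, hj⟩
    obtain ⟨γ, rfl⟩ := Submodule.mem_span_singleton.mp hx
    intro hc
    apply hj
    simp [hc]
  · intro hc
    exact ⟨c, Submodule.mem_span_singleton_self c, hc⟩

lemma csupp_sup {ι : Type*} (U V : Submodule F (ι → F)) :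
    csupp (U ⊔ V) = csupp U ∪ csupp V := by
  apply Set.Subset.antisymm
  · rintro j ⟨x, hx, hj⟩
    obtain ⟨u, hu, v, hv, rfl⟩ := Submodule.mem_sup.mp hx
    by_cases h : u j ≠ 0
    · exact Or.inl ⟨u, hu, h⟩
    · refine Or.inr ⟨v, hv, fun hv0 => hj ?_⟩
      push_neg at h
      show u j + v j = 0
      rw [h, hv0, add_zero]
  · rintro j (⟨x, hx, hj⟩ | ⟨x, hx, hj⟩)
    · exact ⟨x, Submodule.mem_sup_left hx, hj⟩
    · exact ⟨x, Submodule.mem_sup_right hx, hj⟩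

lemma exists_submodule_finrank {V : Type*} [AddCommGroup V] [Module F V] [FiniteDimensional F V]
    (r : ℕ) (h : r ≤ finrank F V) : ∃ W : Submodule F V, finrank F W = r := by
  classical
  let b := finBasis F V
  refine ⟨Submodule.span F (Set.range (b ∘ Fin.castLE h)), ?_⟩
  rw [finrank_span_eq_card (b.linearIndependent.comp _ (Fin.castLE_injective h))]
  simp

lemma pair_min {n k s : ℕ} (C : Submodule F (Fin n → F)) (hC : finrank F C = k)
    (hs1 : 1 ≤ s) (hsk : s + 1 ≤ k) (hmin : SMinimal C s)
    {x y : Fin n → F} (hxC : x ∈ C) (hyC : y ∈ C) (hy : y ≠ 0)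
    (hsupp : Function.support x ⊆ Function.support y) : x ∈ Submodule.span F {y} := by
  classical
  by_contra hxy
  have hx : x ≠ 0 := fun h => hxy (h ▸ Submodule.zero_mem _)
  set P : Submodule F (Fin n → F) := Submodule.span F {x, y} with hPdef
  have hPC : P ≤ C := by
    rw [hPdef, Submodule.span_le]
    rintro z (rfl | rfl) <;> assumption
  set P' : Submodule F ↥C := P.comap C.subtype with hP'def
  obtain ⟨Q', hQ'⟩ := P'.exists_isCompl
  have hrkP' : finrank F P' = finrank F P :=
    (Submodule.comapSubtypeEquivOfLe hPC).finrank_eq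
  have hrkP : finrank F P ≤ 2 := by
    have := finrank_span_le_card (R := F) ({x, y} : Set (Fin n → F))
    refine le_trans this ?_
    rw [Set.toFinset_insert, Set.toFinset_singleton]
    exact (Finset.card_insert_le _ _).trans (by simp)
  have hrkQ' : s - 1 ≤ finrank F Q' := by
    have hsum : finrank F P' + finrank F Q' = k := by
      rw [Submodule.finrank_add_eq_of_isCompl hQ', hC]
    omega
  obtain ⟨W'', hW''⟩ := exists_submodule_finrank (V := ↥Q') (s - 1) hrkQ'
  set W : Submodule F (Fin n → F) := (W''.map Q'.subtype).map C.subtype with hWdef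
  have hWC : W ≤ C := Submodule.map_subtype_le _ _
  have hrkW : finrank F W = s - 1 := by
    rw [hWdef, Submodule.finrank_map_subtype_eq, Submodule.finrank_map_subtype_eq, hW'']
  have hWP : W ⊓ P = ⊥ := by
    rw [Submodule.eq_bot_iff]
    rintro z ⟨hzW, hzP⟩
    rw [hWdef] at hzW
    obtain ⟨w', hw', rfl⟩ := hzW
    have hw'Q' : w' ∈ Q' := by
      obtain ⟨w'', _, rfl⟩ := hw'
      simpa using w''.2
    have hw'P' : w' ∈ P' := hzP
    have : w' ∈ Q' ⊓ P' := ⟨hw'Q', hw'P'⟩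
    rw [inf_comm, hQ'.inf_eq_bot] at this
    rw [this]
    rfl
  have hxP : x ∈ P := Submodule.subset_span (by simp)
  have hyP : y ∈ P := Submodule.subset_span (by simp)
  set U : Submodule F (Fin n → F) := Submodule.span F {x} ⊔ W with hUdef
  set V : Submodule F (Fin n → F) := Submodule.span F {y} ⊔ W with hVdef
  have hUC : U ≤ C := sup_le ((Submodule.span_singleton_le_iff_mem _ _).mpr hxC) hWC
  have hVC : V ≤ C := sup_le ((Submodule.span_singleton_le_iff_mem _ _).mpr hyC) hWC
  have hrk : ∀ z : Fin n → F, z ≠ 0 → z ∈ P →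
      finrank F ↥(Submodule.span F {z} ⊔ W) = s := by
    intro z hz hzP
    have hinf : Submodule.span F {z} ⊓ W = ⊥ := by
      rw [← le_bot_iff, ← hWP]
      exact inf_le_inf_right W ((Submodule.span_singleton_le_iff_mem _ _).mpr hzP) |>.trans
        (le_of_eq (inf_comm _ _))
    have := Submodule.finrank_sup_add_finrank_inf_eq (Submodule.span F {z}) W
    rw [hinf, finrank_span_singleton hz, hrkW] at this
    simp only [finrank_bot, add_zero] at this
    omega
  have hUV : U = V := by
    refine (hmin V hVC (hrk y hy hyP)).2.2 U hUC (hrk x hx hxP) ?_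
    rw [hUdef, hVdef, csupp_sup, csupp_sup, csupp_span_singleton, csupp_span_singleton]
    exact Set.union_subset_union_left _ hsupp
  have hxU : x ∈ U := Submodule.mem_sup_left (Submodule.mem_span_singleton_self x)
  rw [hUV, hVdef] at hxU
  obtain ⟨a, ha, w, hw, hxw⟩ := Submodule.mem_sup.mp hxU
  obtain ⟨γ, rfl⟩ := Submodule.mem_span_singleton.mp ha
  have hwP : w ∈ P := by
    have : w = x - γ • y := by rw [← hxw]; abel
    rw [this]
    exact Submodule.sub_mem _ hxP (Submodule.smul_mem _ _ hyP)
  have : w ∈ W ⊓ P := ⟨hw, hwP⟩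
  rw [hWP] at this
  rw [Submodule.mem_bot] at this
  rw [this, add_zero] at hxw
  exact hxy (hxw ▸ Submodule.mem_span_singleton.mpr ⟨γ, rfl⟩)

/-- the minimum distance `d = d_1(C)` of an `s`-minimal `[n,k,d]_q` code
satisfies `d ≥ (q-1)(k-1) + 1`. -/
theorem sMinimal_min_distance_lower_bound (n k s q d : ℕ) (hq : Fintype.card F = q)
    (hs1 : 1 ≤ s) (hs2 : s ≤ k - 1)
    (C : Submodule F (Fin n → F)) (hC : Module.finrank F C = k)
    (hd : dGHW C 1 = d) (hmin : SMinimal C s) :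
    (q - 1) * (k - 1) + 1 ≤ d := by

  classical
  have hq2 : 2 ≤ q := hq ▸ Fintype.one_lt_card
  have hsk : s + 1 ≤ k := by
    rcases Nat.eq_zero_or_pos k with rfl | hk
    · omega
    · omega
  -- find a nonzero codeword
  have hCbot : C ≠ ⊥ := by
    intro h
    rw [h, finrank_bot] at hC
    omega
  obtain ⟨c₀, hc₀C, hc₀⟩ := (Submodule.ne_bot_iff C).mp hCbot
  -- the sInf is attained
  have hne : {w | ∃ U : Submodule F (Fin n → F), U ≤ C ∧ finrank F U = 1 ∧ wt U = w}.Nonempty :=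
    ⟨wt (Submodule.span F {c₀}), Submodule.span F {c₀},
      (Submodule.span_singleton_le_iff_mem _ _).mpr hc₀C, finrank_span_singleton hc₀, rfl⟩
  have hdmem : ∃ U : Submodule F (Fin n → F), U ≤ C ∧ finrank F U = 1 ∧ wt U = d := by
    have h1 : dGHW C 1 ∈
        {w | ∃ U : Submodule F (Fin n → F), U ≤ C ∧ finrank F U = 1 ∧ wt U = w} :=
      Nat.sInf_mem hne
    rw [hd] at h1
    exact h1
  obtain ⟨U, hUC, hU1, hUw⟩ := hdmem
  have hUbot : U ≠ ⊥ := by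
    intro h
    rw [h, finrank_bot] at hU1
    omega
  obtain ⟨c, hcU, hc⟩ := (Submodule.ne_bot_iff U).mp hUbot
  have hcC : c ∈ C := hUC hcU
  have hUeq : U = Submodule.span F {c} := by
    refine (Submodule.eq_of_le_of_finrank_eq
      ((Submodule.span_singleton_le_iff_mem _ _).mpr hcU) ?_).symm
    rw [hU1, finrank_span_singleton hc]
  -- support of c
  set Sf : Finset (Fin n) := Finset.univ.filter (fun j => c j ≠ 0) with hSfdef
  have hSd : Sf.card = d := by
    have : csupp U = ↑Sf := by
      rw [hUeq, csupp_span_singleton]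
      ext j
      simp [hSfdef, Function.mem_support]
    rw [← hUw, wt, this, Set.ncard_coe_finset]
  -- basis setup
  set m : ℕ := k - 1 with hmdef
  have hm : 0 < m := by omega
  set c' : ↥C := ⟨c, hcC⟩ with hc'def
  have hc' : c' ≠ 0 := by
    intro h
    apply hc
    have := congrArg (Subtype.val) h
    exact this
  obtain ⟨Q, hQ⟩ := (Submodule.span F {c'}).exists_isCompl
  have hrkQ : finrank F Q = m := by
    have := Submodule.finrank_add_eq_of_isCompl hQ
    rw [finrank_span_singleton hc', hC] at this
    omega
  haveI : Module.Free F ↥Q := Module.Free.of_divisionRing F ↥Q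
  obtain ⟨bQ⟩ : Nonempty (Basis (Fin m) F Q) := ⟨(finBasis F Q).reindex (finCongr hrkQ)⟩
  set w : Fin m → (Fin n → F) := fun i => ((bQ i : ↥C) : Fin n → F) with hwdef
  have hwC : ∀ i, w i ∈ C := fun i => ((bQ i : ↥C)).2
  -- key: x built from a is not in span {c}
  have hxspan : ∀ a : Fin m → F, a ≠ 0 → (∑ i, a i • w i) ∉ Submodule.span F {c} := by
    intro a ha hmem
    obtain ⟨γ, hγ⟩ := Submodule.mem_span_singleton.mp hmem
    set η : ↥Q := ∑ i, a i • bQ i with hηdef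
    have hηcoe : ((η : ↥C) : Fin n → F) = ∑ i, a i • w i := by
      rw [hηdef]
      push_cast
      rfl
    have hηc : (η : ↥C) = γ • c' := Subtype.ext (by rw [hηcoe, ← hγ]; rfl)
    have hmem2 : (η : ↥C) ∈ Submodule.span F {c'} ⊓ Q :=
      ⟨hηc ▸ Submodule.mem_span_singleton.mpr ⟨γ, rfl⟩, SetLike.coe_mem η⟩
    rw [hQ.inf_eq_bot, Submodule.mem_bot] at hmem2
    have hη0 : η = 0 := by exact_mod_cast hmem2
    rw [hηdef] at hη0
    have h2 := congrArg (fun z => (bQ.repr z : Fin m → F)) hη0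
    simp only [Basis.repr_sum_self, map_zero] at h2
    exact ha (by simpa using h2)
  -- blocking property
  have hblock : ∀ a : Fin m → F, a ≠ 0 → ∀ β : F,
      ∃ j ∈ Sf, ∑ i, a i * (w i j * (c j)⁻¹) = β := by
    intro a ha β
    set x : Fin n → F := ∑ i, a i • w i with hxdef
    have hxC : x ∈ C := Submodule.sum_mem _ fun i _ => Submodule.smul_mem _ _ (hwC i)
    have hxs := hxspan a ha
    by_contra hcon
    push_neg at hcon
    have hj : ∃ j, c j ≠ 0 ∧ x j = β * c j := by
      by_contra hcon2
      push_neg at hcon2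
      set y : Fin n → F := x - β • c with hydef
      have hyC : y ∈ C := Submodule.sub_mem _ hxC (Submodule.smul_mem _ _ hcC)
      have hy : y ≠ 0 := by
        intro h
        apply hxs
        rw [hydef] at h
        have : x = β • c := sub_eq_zero.mp h
        have hmm : x ∈ Submodule.span F {c} := this ▸ Submodule.mem_span_singleton.mpr ⟨β, rfl⟩
        rw [hxdef] at hmm
        exact hmm
      have hsupp : Function.support c ⊆ Function.support y := by
        intro j hcj
        simp only [Function.mem_support] at hcj ⊢
        intro h0
        rw [hydef] at h0
        have h0' : x j - β * c j = 0 := by simpa using h0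
        exact hcon2 j hcj (sub_eq_zero.mp h0')
      have hcy := pair_min C hC hs1 hsk hmin hcC hyC hy hsupp
      obtain ⟨γ, hγ⟩ := Submodule.mem_span_singleton.mp hcy
      have hγ0 : γ ≠ 0 := by
        intro h
        rw [h, zero_smul] at hγ
        exact hc hγ.symm
      apply hxs
      have : x = (γ⁻¹ + β) • c := by
        have hyc : y = γ⁻¹ • c := by
          rw [← hγ, smul_smul, inv_mul_cancel₀ hγ0, one_smul]
        calc x = y + β • c := by rw [hydef]; abel
          _ = γ⁻¹ • c + β • c := by rw [hyc]
          _ = (γ⁻¹ + β) • c := by rw [add_smul]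
      have hmm : x ∈ Submodule.span F {c} := this ▸ Submodule.mem_span_singleton.mpr ⟨_, rfl⟩
      rw [hxdef] at hmm
      exact hmm
    obtain ⟨j, hcj, hxj⟩ := hj
    refine hcon j (by simp [hSfdef, hcj]) ?_
    have hxj' : x j = ∑ i, a i * w i j := by
      rw [hxdef]
      simp [Finset.sum_apply]
    calc ∑ i, a i * (w i j * (c j)⁻¹) = (∑ i, a i * w i j) * (c j)⁻¹ := by
          rw [Finset.sum_mul]
          exact Finset.sum_congr rfl fun i _ => by ring
      _ = β := by rw [← hxj', hxj, mul_assoc, mul_inv_cancel₀ hcj, mul_one]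
  -- apply jamison
  set p : Fin n → (Fin m → F) := fun j i => w i j * (c j)⁻¹ with hpdef
  set B : Finset (Fin m → F) := Sf.image p with hBdef
  have hB : ∀ a : Fin m → F, a ≠ 0 → ∀ β : F, ∃ z ∈ B, ∑ i, a i * z i = β := by
    intro a ha β
    obtain ⟨j, hj, hjs⟩ := hblock a ha β
    exact ⟨p j, Finset.mem_image_of_mem _ hj, hjs⟩
  have hj := jamison hm B hB
  rw [hq] at hj
  have hcard : B.card ≤ Sf.card := Finset.card_image_le
  calc (q - 1) * m + 1 = m * (q - 1) + 1 := by rw [Nat.mul_comm]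
    _ ≤ B.card := hj
    _ ≤ Sf.card := hcard
    _ = d := hSd
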